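/- arXiv:2304.04116 — 2 statements merged into one kernel-verified Lean document; each statement's English description precedes it below -/
import Mathlib

section
/- Fix m ∈ M with ‖m‖₁ > 0, and let t_m = sup_{s' ∈ S} D_m(s') / 2. A segmentation s ∈ S maximizes Dice, i.e., D_m(s) = sup_{s' ∈ S} D_m(s'), if and only if, for λ-almost every ω ∈ Ω: s(ω) = 1 when m(ω) > t_m, and s(ω) = 0 when m(ω) < t_m (s(ω) may take either value in {0,1} when m(ω) = t_m). -/
open MeasureTheory Real Set
open scoped ENNReal

noncomputable section

/-- The unit cube `Ω = [0,1]^n` in `ℝ^n`. -/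
def cube (n : ℕ) : Set (EuclideanSpace ℝ (Fin n)) :=
  WithLp.ofLp ⁻¹' (Set.univ.pi fun _ : Fin n => Set.Icc (0:ℝ) 1)

/-- Lebesgue measure restricted to the unit cube. -/
def lam (n : ℕ) : Measure (EuclideanSpace ℝ (Fin n)) := volume.restrict (cube n)

/-- `S`: measurable functions `Ω → {0,1}` (as real-valued functions on `ℝ^n`). -/
def IsSeg {n : ℕ} (s : EuclideanSpace ℝ (Fin n) → ℝ) : Prop :=
  Measurable s ∧ ∀ ω, s ω = 0 ∨ s ω = 1

/-- `M`: measurable functions `Ω → [0,1]`. -/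
def IsSoft {n : ℕ} (m : EuclideanSpace ℝ (Fin n) → ℝ) : Prop :=
  Measurable m ∧ ∀ ω, m ω ∈ Set.Icc (0:ℝ) 1

/-- `‖f‖₁ = ∫_Ω |f| dλ`. -/
def l1 {n : ℕ} (f : EuclideanSpace ℝ (Fin n) → ℝ) : ℝ := ∫ ω, |f ω| ∂(lam n)

/-- Accuracy `A_m(s)`. -/
def accur {n : ℕ} (m s : EuclideanSpace ℝ (Fin n) → ℝ) : ℝ :=
  ∫ ω, (s ω * m ω + (1 - s ω) * (1 - m ω)) ∂(lam n)

/-- Dice `D_m(s)`. -/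
def dice {n : ℕ} (m s : EuclideanSpace ℝ (Fin n) → ℝ) : ℝ :=
  2 * (∫ ω, s ω * m ω ∂(lam n)) / (l1 s + l1 m)

/-- soft-Dice `SD_m(c)`. -/
def sdice {n : ℕ} (m c : EuclideanSpace ℝ (Fin n) → ℝ) : ℝ :=
  1 - 2 * (∫ ω, c ω * m ω ∂(lam n)) / (l1 c + l1 m)

/-- pointwise cross-entropy term `-(m log c)` in `[0,∞]`, with `0·log 0 = 0`, `log 0 = -∞`. -/
def ceTerm (m c : ℝ) : ℝ≥0∞ :=
  if m = 0 then 0 else if c = 0 then ⊤ else ENNReal.ofReal (-(m * Real.log c))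

/-- cross-entropy `CE_m(c) ∈ [0,∞]`. -/
def crossEnt {n : ℕ} (m c : EuclideanSpace ℝ (Fin n) → ℝ) : ℝ≥0∞ :=
  ∫⁻ ω, (ceTerm (m ω) (c ω) + ceTerm (1 - m ω) (1 - c ω)) ∂(lam n)

/-- the thresholded segmentation `I_{[t,1]} ∘ c`. -/
def thresh {n : ℕ} (t : ℝ) (c : EuclideanSpace ℝ (Fin n) → ℝ) :
    EuclideanSpace ℝ (Fin n) → ℝ := fun ω => if t ≤ c ω then 1 else 0

/-- `sup_{s' ∈ S} D_m(s')`. -/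
def supDice {n : ℕ} (m : EuclideanSpace ℝ (Fin n) → ℝ) : ℝ :=
  ⨆ s' : {s' : EuclideanSpace ℝ (Fin n) → ℝ // IsSeg s'}, dice m s'.1

/-- the centered isotropic Gaussian density `p_{σ²}` on `ℝ^n`. -/
def pdens (n : ℕ) (σ2 : ℝ) (x : EuclideanSpace ℝ (Fin n)) : ℝ :=
  (2 * π * σ2) ^ (-(n:ℝ)/2) * Real.exp (-‖x‖^2 / (2 * σ2))

namespace DiceAux

instance lamFinite (n : ℕ) : IsFiniteMeasure (lam n) := by
  constructor
  rw [lam, Measure.restrict_apply_univ]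
  exact ((PiLp.homeomorph 2 fun _ : Fin n => ℝ).isCompact_preimage.2
    (isCompact_univ_pi fun _ => isCompact_Icc)).measure_lt_top

variable {n : ℕ} {m s : EuclideanSpace ℝ (Fin n) → ℝ}

lemma integrable_of_bdd {f : EuclideanSpace ℝ (Fin n) → ℝ} (hf : Measurable f)
    (C : ℝ) (h : ∀ ω, |f ω| ≤ C) : Integrable f (lam n) :=
  (integrable_const C).mono' hf.aestronglyMeasurable (ae_of_all _ fun ω => by simpa using h ω)

lemma seg01 (hs : IsSeg s) (ω) : 0 ≤ s ω ∧ s ω ≤ 1 := by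
  rcases hs.2 ω with h | h <;> simp [h]

lemma seg_integrable (hs : IsSeg s) : Integrable s (lam n) :=
  integrable_of_bdd hs.1 1 fun ω => abs_le.2 ⟨by linarith [(seg01 hs ω).1], (seg01 hs ω).2⟩

lemma mul_integrable (hm : IsSoft m) (hs : IsSeg s) :
    Integrable (fun ω => s ω * m ω) (lam n) := by
  refine integrable_of_bdd (hs.1.mul hm.1) 1 fun ω => ?_
  have h1 := seg01 hs ω
  have h2 := hm.2 ω
  rw [abs_of_nonneg (mul_nonneg h1.1 h2.1)]
  nlinarith [h2.1, h2.2, h1.1, h1.2]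

lemma l1_nonneg (f : EuclideanSpace ℝ (Fin n) → ℝ) : 0 ≤ l1 f :=
  integral_nonneg fun ω => abs_nonneg _

lemma l1_seg (hs : IsSeg s) : l1 s = ∫ ω, s ω ∂(lam n) :=
  integral_congr_ae (ae_of_all _ fun ω => abs_of_nonneg (seg01 hs ω).1)

lemma l1_seg_le (hs : IsSeg s) : l1 s ≤ ((lam n) Set.univ).toReal := by
  rw [l1_seg hs]
  calc ∫ ω, s ω ∂(lam n) ≤ ∫ _ω, (1:ℝ) ∂(lam n) :=
        integral_mono (seg_integrable hs) (integrable_const 1) fun ω => (seg01 hs ω).2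
    _ = ((lam n) Set.univ).toReal := by simp; rfl

lemma F_integrable (hm : IsSoft m) (hs : IsSeg s) (t : ℝ) :
    Integrable (fun ω => s ω * (m ω - t)) (lam n) := by
  have : (fun ω => s ω * (m ω - t)) = fun ω => s ω * m ω - t * s ω := by funext ω; ring
  rw [this]
  exact (mul_integrable hm hs).sub ((seg_integrable hs).const_mul t)

lemma F_eq (hm : IsSoft m) (hs : IsSeg s) (t : ℝ) :
    ∫ ω, s ω * (m ω - t) ∂(lam n)
      = (∫ ω, s ω * m ω ∂(lam n)) - t * l1 s := by
  have h : (fun ω => s ω * (m ω - t)) = fun ω => s ω * m ω - t * s ω := by funext ω; ring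
  rw [h, integral_sub (mul_integrable hm hs) ((seg_integrable hs).const_mul t),
    MeasureTheory.integral_const_mul, l1_seg hs]

lemma denom_pos (hm1 : 0 < l1 m) (hs : IsSeg s) : 0 < l1 s + l1 m := by
  have := l1_nonneg s; linarith

lemma dice_identity (hm : IsSoft m) (hm1 : 0 < l1 m) (hs : IsSeg s) (t : ℝ) :
    dice m s = 2 * t + (2 / (l1 s + l1 m)) *
      ((∫ ω, s ω * (m ω - t) ∂(lam n)) - t * l1 m) := by
  have hd := denom_pos hm1 hs
  rw [F_eq hm hs t, dice]
  field_simp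
  ring

lemma dice_le_two (hm : IsSoft m) (hm1 : 0 < l1 m) (hs : IsSeg s) : dice m s ≤ 2 := by
  have hd := denom_pos hm1 hs
  rw [dice, div_le_iff₀ hd]
  have h1 : ∫ ω, s ω * m ω ∂(lam n) ≤ l1 m := by
    have : l1 m = ∫ ω, m ω ∂(lam n) :=
      integral_congr_ae (ae_of_all _ fun ω => abs_of_nonneg (hm.2 ω).1)
    rw [this]
    refine integral_mono (mul_integrable hm hs)
      (integrable_of_bdd hm.1 1 fun ω => abs_le.2 ⟨by linarith [(hm.2 ω).1], (hm.2 ω).2⟩)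
      fun ω => ?_
    have h1 := seg01 hs ω
    have h2 := hm.2 ω
    nlinarith [h1.1, h1.2, h2.1]
  have h2 := l1_nonneg s
  linarith

lemma dice_le_sup (hm : IsSoft m) (hm1 : 0 < l1 m) (hs : IsSeg s) :
    dice m s ≤ supDice m := by
  have hb : BddAbove (Set.range fun s' : {s' : EuclideanSpace ℝ (Fin n) → ℝ // IsSeg s'} =>
      dice m s'.1) := ⟨2, by rintro x ⟨s', rfl⟩; exact dice_le_two hm hm1 s'.2⟩
  exact le_ciSup hb ⟨s, hs⟩

end DiceAux

/-- Optimal segmentations for Dice: `s` maximizes `D_m` over `S` iff λ-a.e. `s(ω) = 1`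
when `m(ω) > t_m` and `s(ω) = 0` when `m(ω) < t_m`, where `t_m = sup_{s'∈S} D_m(s')/2`. -/
theorem dice_maximizer_iff
    (n : ℕ) (hn : 1 ≤ n)
    (m : EuclideanSpace ℝ (Fin n) → ℝ) (hm : IsSoft m) (hm1 : 0 < l1 m)
    (s : EuclideanSpace ℝ (Fin n) → ℝ) (hs : IsSeg s) :
    dice m s = (⨆ s' : {s' : EuclideanSpace ℝ (Fin n) → ℝ // IsSeg s'}, dice m s'.1)
      ↔ ∀ᵐ ω ∂(lam n),
          (supDice m / 2 < m ω → s ω = 1) ∧ (m ω < supDice m / 2 → s ω = 0) := by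
  have hsup : (⨆ s' : {s' : EuclideanSpace ℝ (Fin n) → ℝ // IsSeg s'}, dice m s'.1)
      = supDice m := rfl
  rw [hsup]
  set t := supDice m / 2 with ht
  have h2t : 2 * t = supDice m := by rw [ht]; ring
  -- the threshold segmentation
  set s₀ : EuclideanSpace ℝ (Fin n) → ℝ := fun ω => if t ≤ m ω then 1 else 0 with hs₀def
  have hs₀ : IsSeg s₀ :=
    ⟨Measurable.ite (measurableSet_le measurable_const hm.1) measurable_const
      measurable_const, fun ω => by by_cases h : t ≤ m ω <;> simp [s₀, h]⟩
  -- pointwise domination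
  have hpt : ∀ (s' : EuclideanSpace ℝ (Fin n) → ℝ), IsSeg s' →
      ∀ ω, s' ω * (m ω - t) ≤ s₀ ω * (m ω - t) := by
    intro s' hs' ω
    have h1 := DiceAux.seg01 hs' ω
    by_cases h : t ≤ m ω
    · simp only [hs₀def, if_pos h]; nlinarith
    · simp only [hs₀def, if_neg h]; push_neg at h; nlinarith
  have hFle : ∀ (s' : EuclideanSpace ℝ (Fin n) → ℝ), IsSeg s' →
      ∫ ω, s' ω * (m ω - t) ∂(lam n) ≤ ∫ ω, s₀ ω * (m ω - t) ∂(lam n) :=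
    fun s' hs' => integral_mono (DiceAux.F_integrable hm hs' t)
      (DiceAux.F_integrable hm hs₀ t) (hpt s' hs')
  -- F s₀ = t * l1 m
  have key : ∫ ω, s₀ ω * (m ω - t) ∂(lam n) = t * l1 m := by
    have hd := DiceAux.denom_pos hm1 hs₀
    have hdp : 0 < 2 / (l1 s₀ + l1 m) := by positivity
    refine le_antisymm ?_ ?_
    · have h := DiceAux.dice_le_sup hm hm1 hs₀
      rw [DiceAux.dice_identity hm hm1 hs₀ t, h2t] at h
      nlinarith
    · by_contra hlt
      push_neg at hlt
      set δ := t * l1 m - ∫ ω, s₀ ω * (m ω - t) ∂(lam n) with hδ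
      have hδpos : 0 < δ := by rw [hδ]; linarith
      set C := ((lam n) Set.univ).toReal with hC
      have hC0 : 0 ≤ C := ENNReal.toReal_nonneg
      have hCl : 0 < C + l1 m := by linarith
      have hbound : ∀ s' : {s' : EuclideanSpace ℝ (Fin n) → ℝ // IsSeg s'},
          dice m s'.1 ≤ supDice m - 2 * δ / (C + l1 m) := by
        rintro ⟨s', hs'⟩
        have hd' := DiceAux.denom_pos hm1 hs'
        have hdle : l1 s' + l1 m ≤ C + l1 m := by
          have := DiceAux.l1_seg_le hs'; rw [← hC] at this; linarith
        have hF : (∫ ω, s' ω * (m ω - t) ∂(lam n)) - t * l1 m ≤ -δ := by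
          have := hFle s' hs'; rw [hδ]; linarith
        rw [DiceAux.dice_identity hm hm1 hs' t, h2t]
        have h1 : (2 / (l1 s' + l1 m)) * ((∫ ω, s' ω * (m ω - t) ∂(lam n)) - t * l1 m)
            ≤ (2 / (l1 s' + l1 m)) * (-δ) :=
          mul_le_mul_of_nonneg_left hF (by positivity)
        have h2 : (2 / (l1 s' + l1 m)) * (-δ) ≤ -(2 * δ / (C + l1 m)) := by
          have hdd : 2 * δ / (C + l1 m) ≤ 2 * δ / (l1 s' + l1 m) := by
            rw [div_le_div_iff₀ hCl hd']; nlinarith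
          have : (2 / (l1 s' + l1 m)) * (-δ) = -(2 * δ / (l1 s' + l1 m)) := by ring
          rw [this]; linarith
        linarith
      haveI : Nonempty {s' : EuclideanSpace ℝ (Fin n) → ℝ // IsSeg s'} := ⟨⟨s, hs⟩⟩
      have hle : supDice m ≤ supDice m - 2 * δ / (C + l1 m) := ciSup_le hbound
      have hpos : 0 < 2 * δ / (C + l1 m) := by positivity
      linarith
  -- dice m s = supDice m ↔ F s = t * l1 m
  have hiff : dice m s = supDice m ↔
      ∫ ω, s ω * (m ω - t) ∂(lam n) = t * l1 m := by
    have hd := DiceAux.denom_pos hm1 hs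
    rw [DiceAux.dice_identity hm hm1 hs t, h2t]
    constructor
    · intro h
      have h0 : (2 / (l1 s + l1 m)) *
          ((∫ ω, s ω * (m ω - t) ∂(lam n)) - t * l1 m) = 0 := by linarith
      rcases mul_eq_zero.1 h0 with h' | h'
      · exact absurd h' (by positivity)
      · linarith
    · intro h; rw [h]; ring
  rw [hiff]
  constructor
  · -- forward
    intro hF
    have hInt : ∫ ω, (s₀ ω * (m ω - t) - s ω * (m ω - t)) ∂(lam n) = 0 := by
      rw [integral_sub (DiceAux.F_integrable hm hs₀ t) (DiceAux.F_integrable hm hs t),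
        key, hF]; ring
    have h0 : 0 ≤ fun ω => s₀ ω * (m ω - t) - s ω * (m ω - t) := by
      intro ω; simp only [Pi.zero_apply]; linarith [hpt s hs ω]
    have hae := (integral_eq_zero_iff_of_nonneg h0
      ((DiceAux.F_integrable hm hs₀ t).sub (DiceAux.F_integrable hm hs t))).1 hInt
    filter_upwards [hae] with ω hω
    simp only [Pi.zero_apply] at hω
    have hω' : s₀ ω * (m ω - t) = s ω * (m ω - t) := by
      have : s₀ ω * (m ω - t) - s ω * (m ω - t) = 0 := hω
      linarith
    constructor
    · intro hgt
      have hs₀ω : s₀ ω = 1 := if_pos hgt.le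
      rcases hs.2 ω with h | h
      · exfalso; rw [hs₀ω, h] at hω'; simp at hω'; linarith
      · exact h
    · intro hlt
      have hs₀ω : s₀ ω = 0 := if_neg (not_le.2 hlt)
      rcases hs.2 ω with h | h
      · exact h
      · exfalso; rw [hs₀ω, h] at hω'; simp at hω'; linarith
  · -- backward
    intro hae
    have : ∫ ω, s ω * (m ω - t) ∂(lam n) = ∫ ω, s₀ ω * (m ω - t) ∂(lam n) := by
      refine integral_congr_ae ?_
      filter_upwards [hae] with ω hω
      rcases lt_trichotomy (m ω) t with h | h | h
      · rw [hω.2 h]; simp only [hs₀def, if_neg (not_le.2 h)]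
      · rw [h]; ring
      · rw [hω.1 h]; simp only [hs₀def, if_pos h.le]
    rw [this, key]
end
end

section
/- Let L be a random segmentation, i.e., a measurable map from a probability space to S such that (ω, outcome) ↦ L(ω) is jointly measurable, and let m ∈ M be its marginal function, m(ω) = E[L(ω)] for all ω ∈ Ω. Suppose the volume of L is almost surely constant, i.e., ‖L‖₁ = E[‖L‖₁] almost surely (equivalently Var[‖L‖₁] = 0), and suppose ‖m‖₁ > 0. Then for every fixed c ∈ M, the expected soft-Dice with respect to the random label equals the soft-Dice with respect to the soft label: E[SD_L(c)] = SD_m(c). -/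
open MeasureTheory Real Set
open scoped ENNReal

noncomputable section

/-- For a random segmentation `L` with marginal `m` and a.s. constant volume,
`E[SD_L(c)] = SD_m(c)`. -/
theorem expected_sdice_eq_soft_sdice
    (n : ℕ) (hn : 1 ≤ n)
    {Θ : Type*} [MeasurableSpace Θ] (P : Measure Θ) [IsProbabilityMeasure P]
    (L : Θ → EuclideanSpace ℝ (Fin n) → ℝ) (hL : ∀ θ, IsSeg (L θ))
    (hLmeas : Measurable fun p : Θ × EuclideanSpace ℝ (Fin n) => L p.1 p.2)
    (m : EuclideanSpace ℝ (Fin n) → ℝ) (hm : IsSoft m)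
    (hmarg : ∀ ω, m ω = ∫ θ, L θ ω ∂P)
    (hvol : ∀ᵐ θ ∂P, l1 (L θ) = ∫ θ', l1 (L θ') ∂P)
    (hm1 : 0 < l1 m)
    (c : EuclideanSpace ℝ (Fin n) → ℝ) (hc : IsSoft c) :
    (∫ θ, sdice (L θ) c ∂P) = sdice m c := by
  obtain ⟨hmm, hmb⟩ := hm
  obtain ⟨hcm, hcb⟩ := hc
  haveI hfin : IsFiniteMeasure (lam n) := by
    constructor
    rw [lam, Measure.restrict_apply_univ]
    exact ((PiLp.homeomorph 2 (fun _ : Fin n => ℝ)).isCompact_preimage.2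
      (isCompact_univ_pi fun _ => isCompact_Icc)).measure_lt_top
  have hL01 : ∀ θ ω, L θ ω ∈ Set.Icc (0:ℝ) 1 := by
    intro θ ω
    rcases (hL θ).2 ω with h | h <;> simp [h]
  -- integrability of (θ,ω) ↦ L θ ω
  have hintL : Integrable (fun p : Θ × EuclideanSpace ℝ (Fin n) => L p.1 p.2)
      (P.prod (lam n)) := by
    apply Integrable.mono' (integrable_const (1:ℝ)) hLmeas.aestronglyMeasurable
    filter_upwards with p
    have h := hL01 p.1 p.2
    rw [Real.norm_eq_abs, abs_of_nonneg h.1]; exact h.2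
  -- integrability of (θ,ω) ↦ c ω * L θ ω
  have hintcL : Integrable (fun p : Θ × EuclideanSpace ℝ (Fin n) => c p.2 * L p.1 p.2)
      (P.prod (lam n)) := by
    apply Integrable.mono' (integrable_const (1:ℝ))
      ((hcm.comp measurable_snd).mul hLmeas).aestronglyMeasurable
    filter_upwards with p
    have h := hL01 p.1 p.2
    have h' := hcb p.2
    simp only [Pi.mul_apply, Function.comp, Real.norm_eq_abs, abs_mul]
    rw [abs_of_nonneg h'.1, abs_of_nonneg h.1]
    nlinarith [h.2, h'.2, h.1, h'.1]
  -- l1 of nonneg functions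
  have hl1m : l1 m = ∫ ω, m ω ∂(lam n) := by
    unfold l1
    exact integral_congr_ae (ae_of_all _ fun ω => abs_of_nonneg (hmb ω).1)
  have hl1L : ∀ θ, l1 (L θ) = ∫ ω, L θ ω ∂(lam n) := by
    intro θ
    unfold l1
    exact integral_congr_ae (ae_of_all _ fun ω => abs_of_nonneg (hL01 θ ω).1)
  -- V = l1 m
  have hV : (∫ θ', l1 (L θ') ∂P) = l1 m := by
    calc (∫ θ', l1 (L θ') ∂P) = ∫ θ, ∫ ω, L θ ω ∂(lam n) ∂P := by
          exact integral_congr_ae (ae_of_all _ fun θ => hl1L θ)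
      _ = ∫ ω, ∫ θ, L θ ω ∂P ∂(lam n) := integral_integral_swap hintL
      _ = ∫ ω, m ω ∂(lam n) := by
          exact integral_congr_ae (ae_of_all _ fun ω => (hmarg ω).symm)
      _ = l1 m := hl1m.symm
  -- Fubini for the numerator
  have hNum : (∫ θ, (∫ ω, c ω * L θ ω ∂(lam n)) ∂P) = ∫ ω, c ω * m ω ∂(lam n) := by
    calc (∫ θ, (∫ ω, c ω * L θ ω ∂(lam n)) ∂P)
        = ∫ ω, ∫ θ, c ω * L θ ω ∂P ∂(lam n) := integral_integral_swap hintcL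
      _ = ∫ ω, c ω * m ω ∂(lam n) := by
          refine integral_congr_ae (ae_of_all _ fun ω => ?_)
          show (∫ θ, c ω * L θ ω ∂P) = c ω * m ω
          rw [integral_const_mul, hmarg ω]
  have hgint : Integrable (fun θ => ∫ ω, c ω * L θ ω ∂(lam n)) P :=
    hintcL.integral_prod_left
  set D : ℝ := l1 c + l1 m with hD
  -- rewrite sdice a.e.
  have hae : ∀ᵐ θ ∂P, sdice (L θ) c = 1 - 2 * (∫ ω, c ω * L θ ω ∂(lam n)) / D := by
    filter_upwards [hvol] with θ hθ
    unfold sdice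
    rw [hθ, hV]
  rw [integral_congr_ae hae]
  have h1 : Integrable (fun θ => 2 * (∫ ω, c ω * L θ ω ∂(lam n)) / D) P :=
    (hgint.const_mul 2).div_const D
  rw [integral_sub (integrable_const 1) h1, integral_const, probReal_univ]
  simp only [ENNReal.toReal_one, smul_eq_mul, one_mul]
  unfold sdice
  rw [← hNum]
  congr 1
  rw [integral_div, ← integral_const_mul, hD]
end
end
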